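/- arXiv:1611.03058 — 2 statements merged into one kernel-verified Lean document; each statement's English description precedes it below -/
import Mathlib

section
/- Let D and T be pretriangulated categories and let F : D ⥤ T be a fully faithful exact functor (commuting with the shifts and sending distinguished triangles to distinguished triangles) which admits a right adjoint G. Let A be a strictly full triangulated subcategory of T (closed under shifts, extensions, and isomorphisms) which is admissible, i.e. the inclusion A ↪ T admits both a left and a right adjoint. Suppose Ω is a spanning class of D such that F(ω) ∈ A for every ω ∈ Ω. Then F(x) ∈ A for every object x of D. -/
open CategoryTheory Category Limits Pretriangulated

/-- A class of objects `Ω` in a pretriangulated category `D` is a spanning class if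
orthogonality (on either side) to all shifts of objects of `Ω` forces an object to be zero. -/
def IsSpanningClass {D : Type*} [Category D] [HasZeroObject D] [Preadditive D]
    [HasShift D ℤ] [∀ n : ℤ, (CategoryTheory.shiftFunctor D n).Additive] [Pretriangulated D]
    (Ω : Set D) : Prop :=
  (∀ t : D, (∀ ω ∈ Ω, ∀ i : ℤ, ∀ f : t ⟶ ω⟦i⟧, f = 0) → IsZero t) ∧
  (∀ t : D, (∀ ω ∈ Ω, ∀ i : ℤ, ∀ f : ω⟦i⟧ ⟶ t, f = 0) → IsZero t)

/-!
Coreflecting `F x` into `A` gives a distinguished triangle `a ⟶ F x ⟶ c ⟶ a⟦1⟧` with `a ∈ A`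
and `c` right orthogonal to `A`. Every `F (ω⟦k⟧) ≅ (F ω)⟦k⟧` lies in `A`, so by adjunction
`G c` receives no nonzero map from the `ω⟦k⟧` and is zero. Hence `F x ⟶ c` vanishes, so `𝟙 c`
factors through `a⟦1⟧ ∈ A` and is zero; thus `F x ≅ a` lies in `A`.
-/

namespace CategoryTheory.Adjunction

variable {C D : Type*} [Category C] [Category D] {L : C ⥤ D} {R : D ⥤ C}

lemma comp_counit_app_bijective (adj : L ⊣ R) [L.Full] [L.Faithful] (b : C) (X : D) :
    Function.Bijective fun φ : L.obj b ⟶ L.obj (R.obj X) ↦ φ ≫ adj.counit.app X := by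
  have hL := Functor.FullyFaithful.ofFullyFaithful L
  have : (fun φ : L.obj b ⟶ L.obj (R.obj X) ↦ φ ≫ adj.counit.app X) =
      (adj.homEquiv b X).symm ∘ hL.preimage := by
    ext φ
    simp [homEquiv_counit]
  rw [this]
  exact (adj.homEquiv b X).symm.bijective.comp hL.homEquiv.symm.bijective

lemma comp_map_injective_of_comp_injective (adj : L ⊣ R) {X Y : D} (g : X ⟶ Y) (a : C)
    (hg : Function.Injective fun φ : L.obj a ⟶ X ↦ φ ≫ g) :
    Function.Injective fun φ : a ⟶ R.obj X ↦ φ ≫ R.map g := by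
  intro φ₁ φ₂ h
  apply (adj.homEquiv a X).symm.injective
  apply hg
  simpa only [← homEquiv_naturality_right_symm] using congrArg (adj.homEquiv a Y).symm h

end CategoryTheory.Adjunction

namespace CategoryTheory.ObjectProperty

variable {C : Type*} [Category C] [HasZeroObject C] [Preadditive C] [HasShift C ℤ]
  [∀ n : ℤ, (shiftFunctor C n).Additive] [Pretriangulated C] (P : ObjectProperty C)

lemma exists_distTriang_rightOrthogonal [P.IsStableUnderShift ℤ] [P.ι.IsLeftAdjoint] (X : C) :
    ∃ (Y Z : C) (f : Y ⟶ X) (g : X ⟶ Z) (h : Z ⟶ Y⟦(1 : ℤ)⟧),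
      Triangle.mk f g h ∈ distTriang C ∧ P Y ∧ P.rightOrthogonal Z := by
  let adj := Adjunction.ofIsLeftAdjoint P.ι
  let Y := P.ι.rightAdjoint.obj X
  let ε : P.ι.obj Y ⟶ X := adj.counit.app X
  obtain ⟨Z, g, h, hT⟩ := distinguished_cocone_triangle ε
  refine ⟨_, Z, ε, g, h, hT, Y.property, fun a f ha ↦ ?_⟩
  -- postcomposition with `ε⟦1⟧` is injective on maps out of `a`, because `a⟦-1⟧ ∈ P`
  have hfh : f ≫ h = 0 :=
    Adjunction.comp_map_injective_of_comp_injective (shiftEquiv C (1 : ℤ)).symm.toAdjunction ε a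
      (adj.comp_counit_app_bijective ⟨a⟦(-1 : ℤ)⟧, P.le_shift _ a ha⟩ X).injective
      (show (f ≫ h) ≫ ε⟦(1 : ℤ)⟧' = 0 ≫ ε⟦(1 : ℤ)⟧' by
        rw [assoc, show h ≫ ε⟦(1 : ℤ)⟧' = 0 from comp_distTriang_mor_zero₃₁ _ hT, comp_zero,
          zero_comp])
  obtain ⟨u, rfl⟩ := Triangle.coyoneda_exact₃ _ hT f hfh
  obtain ⟨v, rfl⟩ := (adj.comp_counit_app_bijective ⟨a, ha⟩ X).surjective u
  exact (assoc _ _ _).trans ((v ≫= comp_distTriang_mor_zero₁₂ _ hT).trans comp_zero)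

variable {P} in
lemma isZero_of_distTriang_of_mor₂_eq_zero [P.IsStableUnderShift ℤ] (T : Triangle C)
    (hT : T ∈ distTriang C) (h₂ : T.mor₂ = 0) (h₁ : P T.obj₁) (h₃ : P.rightOrthogonal T.obj₃) :
    IsZero T.obj₃ := by
  obtain ⟨u, hu⟩ := Triangle.yoneda_exact₃ _ hT (𝟙 T.obj₃) (by simp [h₂])
  rw [IsZero.iff_id_eq_zero, hu, h₃ u (P.le_shift 1 _ h₁), comp_zero]

end CategoryTheory.ObjectProperty

lemma IsSpanningClass.isZero_obj_of_rightOrthogonal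
    {D T : Type*} [Category D] [Category T]
    [HasZeroObject D] [Preadditive D] [HasShift D ℤ]
    [∀ n : ℤ, (shiftFunctor D n).Additive] [Pretriangulated D]
    [HasZeroObject T] [Preadditive T] [HasShift T ℤ]
    {F : D ⥤ T} [F.CommShift ℤ] {G : T ⥤ D} (adj : F ⊣ G)
    {A : ObjectProperty T} [A.IsStableUnderShift ℤ] [A.IsClosedUnderIsomorphisms]
    {Ω : Set D} (hΩ : IsSpanningClass Ω) (hΩA : ∀ ω ∈ Ω, A (F.obj ω))
    {Z : T} (hZ : A.rightOrthogonal Z) : IsZero (G.obj Z) := by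
  refine hΩ.2 _ fun ω hω k f ↦ ?_
  have hA : A (F.obj (ω⟦k⟧)) :=
    A.prop_of_iso ((F.commShiftIso k).app ω).symm (A.le_shift k _ (hΩA ω hω))
  have : Subsingleton (F.obj (ω⟦k⟧) ⟶ Z) := ⟨fun u v ↦ by rw [hZ u hA, hZ v hA]⟩
  have : Subsingleton (ω⟦k⟧ ⟶ G.obj Z) := (adj.homEquiv _ _).symm.subsingleton
  exact Subsingleton.elim f 0

/-- If `F : D ⥤ T` is a fully faithful exact functor with a right adjoint, `A` is an admissible
strictly full triangulated subcategory of `T`, and `Ω` is a spanning class of `D` with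
`F(Ω) ⊆ A`, then the image of `F` is contained in `A`. -/
theorem image_subset_of_spanning_class_subset
    {D T : Type*} [Category D] [Category T]
    [HasZeroObject D] [Preadditive D] [HasShift D ℤ]
    [∀ n : ℤ, (CategoryTheory.shiftFunctor D n).Additive] [Pretriangulated D]
    [HasZeroObject T] [Preadditive T] [HasShift T ℤ]
    [∀ n : ℤ, (CategoryTheory.shiftFunctor T n).Additive] [Pretriangulated T]
    (F : D ⥤ T) [F.Full] [F.Faithful] [F.CommShift ℤ] [F.IsTriangulated]
    (G : T ⥤ D) (adj : F ⊣ G)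
    (A : ObjectProperty T) [A.IsTriangulated] [A.IsClosedUnderIsomorphisms]
    [A.ι.IsRightAdjoint]
    [A.ι.IsLeftAdjoint]
    (Ω : Set D) (hΩ : IsSpanningClass Ω) (hΩA : ∀ ω ∈ Ω, A (F.obj ω)) :
    ∀ x : D, A (F.obj x) := by
  intro x
  obtain ⟨a, c, f, g, h, hT, ha, hc⟩ := A.exists_distTriang_rightOrthogonal (F.obj x)
  have hGc : IsZero (G.obj c) := hΩ.isZero_obj_of_rightOrthogonal adj hΩA hc
  have hg : g = 0 := (adj.homEquiv x c).injective (hGc.eq_of_tgt _ _)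
  have hc₀ : IsZero c := ObjectProperty.isZero_of_distTriang_of_mor₂_eq_zero _ hT hg ha hc
  have : IsIso f := (Triangle.isZero₃_iff_isIso₁ _ hT).mp hc₀
  exact A.prop_of_iso (asIso f) ha
end

section
/- Let m, n, d be integers with 2 ≤ m ≤ n ≤ d, let ζ ∈ k be a primitive d-th root of unity, and let i, j be natural numbers with j ≤ i ≤ m − 2. If P ∈ k[x, y] is homogeneous of total degree m − i − 2 and satisfies σ_ζ(P) = ζ^{n−j−1} · P, then P = 0. -/
open MvPolynomial

/-- The `k`-algebra endomorphism of `k[x, y]` fixing `x` and scaling `y` by `ζ`. -/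
noncomputable def sigmaZeta (k : Type*) [Field k] (ζ : k) :
    MvPolynomial (Fin 2) k →ₐ[k] MvPolynomial (Fin 2) k :=
  aeval ![X 0, ζ • X 1]

/-!
`σ_ζ` acts on the monomial `x^a y^b` by the scalar `ζ^b`, so an eigenvector of `σ_ζ` for the
eigenvalue `ζ^e` only involves monomials with `ζ^b = ζ^e`. In degree `N < e < d` every such `b`
satisfies `b ≤ N < e < d`, and `ζ^b = ζ^e` is impossible for a primitive `d`-th root of unity.
-/

section SigmaZeta

variable {k : Type*} [Field k] (ζ : k)

lemma sigmaZeta_monomial (s : Fin 2 →₀ ℕ) (c : k) :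
    sigmaZeta k ζ (monomial s c) = ζ ^ s 1 • monomial s c := by
  rw [sigmaZeta, aeval_monomial, monomial_eq,
    Finsupp.prod_fintype _ _ (by simp), Finsupp.prod_fintype _ _ (by simp)]
  simp only [Fin.prod_univ_two, Matrix.cons_val_zero, Matrix.cons_val_one,
    algebraMap_eq, smul_eq_C_mul, map_pow]
  ring

lemma coeff_sigmaZeta (P : MvPolynomial (Fin 2) k) (s : Fin 2 →₀ ℕ) :
    coeff s (sigmaZeta k ζ P) = ζ ^ s 1 * coeff s P := by
  induction P using MvPolynomial.induction_on' with
  | monomial u a =>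
    rw [sigmaZeta_monomial, coeff_smul, coeff_monomial, smul_eq_mul]
    split_ifs with h
    · rw [h]
    · rw [mul_zero, mul_zero]
  | add p q hp hq => rw [map_add, coeff_add, coeff_add, hp, hq, mul_add]

variable {ζ}

lemma pow_eq_of_sigmaZeta_eq_smul {P : MvPolynomial (Fin 2) k} {c : k}
    (heig : sigmaZeta k ζ P = c • P) {s : Fin 2 →₀ ℕ} (hs : coeff s P ≠ 0) :
    ζ ^ s 1 = c := by
  have hcoeff := congrArg (coeff s) heig
  rw [coeff_sigmaZeta, coeff_smul, smul_eq_mul] at hcoeff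
  exact mul_right_cancel₀ hs hcoeff

lemma eq_zero_of_sigmaZeta_eq_pow_smul_of_isHomogeneous {d N e : ℕ}
    (hζ : IsPrimitiveRoot ζ d) (hNe : N < e) (hed : e < d) {P : MvPolynomial (Fin 2) k}
    (hhom : P.IsHomogeneous N) (heig : sigmaZeta k ζ P = ζ ^ e • P) :
    P = 0 := by
  ext s
  by_contra hs
  have hs1 : s 1 ≤ N := by
    calc s 1 ≤ s.degree := Finsupp.le_degree 1 s
      _ = N := by rw [Finsupp.degree_eq_weight_one]; exact hhom hs
  have := hζ.pow_inj (by omega) hed (pow_eq_of_sigmaZeta_eq_smul heig hs)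
  omega

end SigmaZeta

/-- For `2 ≤ m ≤ n ≤ d` and `j ≤ i ≤ m - 2`: a homogeneous polynomial `P ∈ k[x,y]` of
degree `m - i - 2` with `σ_ζ(P) = ζ^{n-j-1} · P` is zero.  This is the vanishing
`H^0(l(p,q), O(m-i-2) ⊗ χ^{n-j-1})^{μ_d} = 0` used for the semi-orthogonality
`⟨D_{fg}, A₃⟩`. -/
theorem semiorthogonality_Dfg_A3_vanishing (k : Type*) [Field k] (m n d : ℕ)
    (hm : 2 ≤ m) (hmn : m ≤ n) (hnd : n ≤ d)
    (ζ : k) (hζ : IsPrimitiveRoot ζ d)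
    (i j : ℕ) (hji : j ≤ i) (him : i ≤ m - 2)
    (P : MvPolynomial (Fin 2) k)
    (hhom : P.IsHomogeneous (m - i - 2))
    (heig : sigmaZeta k ζ P = ζ ^ (n - j - 1) • P) :
    P = 0 :=
  eq_zero_of_sigmaZeta_eq_pow_smul_of_isHomogeneous hζ (by omega) (by omega) hhom heig
end
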